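/- If W ∈ S^{n×n} is an upper triangular unimodular matrix over S = F(t)[D;δ] with all diagonal entries equal to 1, and W·H is again in Hermite form for a matrix H in Hermite form with full row rank, then W = I_n. -/

import Mathlib

/-- Abstract presentation of a skew (Ore/differential) polynomial ring `S = K[D; δ]`:
`S` is a ring containing `K` via `ι`, with a distinguished element `D` satisfying the
commutation rule `D * a = a * D + δ a`, and every element of `S` is (uniquely) a finite
sum `∑ aₙ Dⁿ`, with coefficients `coeff` supported on `supp`. -/
structure DiffPolyRing (K : Type) [CommRing K] (S : Type) [Ring S] (δ : K → K) where
  ι : K →+* S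
  D : S
  comm_rule : ∀ a : K, D * ι a = ι a * D + ι (δ a)
  coeff : S → ℕ → K
  supp : S → Finset ℕ
  mem_supp : ∀ f n, n ∈ supp f ↔ coeff f n ≠ 0
  coeff_add : ∀ f g n, coeff (f + g) n = coeff f n + coeff g n
  coeff_ext : ∀ f g : S, (∀ n, coeff f n = coeff g n) → f = g
  coeff_monomial : ∀ (a : K) (i n : ℕ), coeff (ι a * D ^ i) n = if n = i then a else 0
  repr_sum : ∀ f : S, f = ∑ n ∈ supp f, ι (coeff f n) * D ^ n

namespace DiffPolyRing

variable {K S : Type} [CommRing K] [Ring S] {δ : K → K}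

/-- Degree in the variable `D`, with `degD 0 = ⊥` (i.e. `-∞`). -/
noncomputable def degD (R : DiffPolyRing K S δ) (f : S) : WithBot ℕ := (R.supp f).max

/-- Degree in `D` as a natural number (`0` for the zero polynomial). -/
noncomputable def natDegD (R : DiffPolyRing K S δ) (f : S) : ℕ := WithBot.unbotD 0 (R.degD f)

/-- `f` is monic: its leading coefficient (in `D`) is `1`. -/
noncomputable def Monic (R : DiffPolyRing K S δ) (f : S) : Prop :=
  R.coeff f (R.natDegD f) = 1

/-- `H` is in Hermite form: upper triangular, monic diagonal entries, and each
off-diagonal entry has `D`-degree strictly less than the diagonal entry below it. -/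
noncomputable def HermiteForm (R : DiffPolyRing K S δ) {n : ℕ}
    (H : Matrix (Fin n) (Fin n) S) : Prop :=
  (∀ i j, j < i → H i j = 0) ∧ (∀ i, R.Monic (H i i)) ∧
    (∀ i j, i < j → R.degD (H i j) < R.degD (H j j))

/-- The rows of `A` are left `S`-linearly independent. -/
def FullRowRank {n : ℕ} (A : Matrix (Fin n) (Fin n) S) : Prop :=
  ∀ c : Fin n → S, (∀ j, (∑ i, c i * A i j) = 0) → c = 0

end DiffPolyRing

/-!
Induct on the columns of `W`. If the columns left of `j` are those of the identity, then for
`i < j` the entry `(W * H) i j` is `H i j + W i j * H j j`, while `(W * H) j j = H j j`. Both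
`H i j` and `(W * H) i j` have `D`-degree below that of the monic `H j j`; but if `W i j ≠ 0`,
then `W i j * H j j` has degree at least that of `H j j`, because leading coefficients multiply
in `S` (the commutation rule `D a = a D + δ a` only produces terms of lower degree). So the
difference `W i j * H j j` of two reduced elements vanishes.
-/

namespace Matrix

variable {α ι : Type*} [Semiring α] [Fintype ι] [LinearOrder ι]

lemma mul_apply_self_eq_mul {W H : Matrix ι ι α} {j : ι} (hW : ∀ k < j, W j k = 0)
    (hH : ∀ k, j < k → H k j = 0) : (W * H) j j = W j j * H j j := by
  rw [mul_apply]
  refine Fintype.sum_eq_single j fun k hk => ?_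
  rcases hk.lt_or_gt with hk | hk
  · rw [hW k hk, zero_mul]
  · rw [hH k hk, mul_zero]

lemma mul_apply_eq_mul_add_mul {W H : Matrix ι ι α} {i j : ι} (hij : i ≠ j)
    (hW : ∀ k < j, k ≠ i → W i k = 0) (hH : ∀ k, j < k → H k j = 0) :
    (W * H) i j = W i i * H i j + W i j * H j j := by
  rw [mul_apply]
  refine Fintype.sum_eq_add i j hij fun k ⟨hki, hkj⟩ => ?_
  rcases hkj.lt_or_gt with hk | hk
  · rw [hW k hk hki, zero_mul]
  · rw [hH k hk, mul_zero]

end Matrix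

namespace DiffPolyRing

variable {K S : Type} [CommRing K] [Ring S] {δ : K → K} (R : DiffPolyRing K S δ)

def coeffHom (n : ℕ) : S →+ K := AddMonoidHom.mk' (R.coeff · n) (fun f g => R.coeff_add f g n)

lemma coeff_zero (n : ℕ) : R.coeff 0 n = 0 := map_zero (R.coeffHom n)

lemma coeff_sub (f g : S) (n : ℕ) : R.coeff (f - g) n = R.coeff f n - R.coeff g n :=
  map_sub (R.coeffHom n) f g

lemma coeff_sum {α : Type*} (s : Finset α) (f : α → S) (n : ℕ) :
    R.coeff (∑ i ∈ s, f i) n = ∑ i ∈ s, R.coeff (f i) n :=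
  map_sum (R.coeffHom n) f s

lemma ite_mem_supp (f : S) (n : ℕ) :
    (if n ∈ R.supp f then R.coeff f n else 0) = R.coeff f n := by
  rw [ite_eq_left_iff, R.mem_supp, not_not]
  exact Eq.symm

lemma coeff_sum_monomial (s : Finset ℕ) (c : ℕ → K) (n : ℕ) :
    R.coeff (∑ k ∈ s, R.ι (c k) * R.D ^ k) n = if n ∈ s then c n else 0 := by
  simp only [coeff_sum, coeff_monomial, Finset.sum_ite_eq]

lemma δ_zero (R : DiffPolyRing K S δ) : δ 0 = 0 := by
  have h := R.comm_rule 0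
  rw [map_zero, mul_zero, zero_mul, zero_add] at h
  simpa [← h, coeff_zero, eq_comm] using R.coeff_monomial (δ 0) 0 0

lemma le_natDegD_of_mem_supp {f : S} {n : ℕ} (h : n ∈ R.supp f) : n ≤ R.natDegD f :=
  WithBot.coe_le_coe.mp ((Finset.le_max h).trans (WithBot.le_coe_unbotD _ 0))

lemma coeff_eq_zero_of_natDegD_lt {f : S} {n : ℕ} (h : R.natDegD f < n) : R.coeff f n = 0 := by
  by_contra hn
  exact absurd (R.le_natDegD_of_mem_supp ((R.mem_supp f n).mpr hn)) (not_le.mpr h)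

lemma natDegD_mem_supp {f : S} (hf : f ≠ 0) : R.natDegD f ∈ R.supp f := by
  have hne : (R.supp f).Nonempty := by
    refine Finset.nonempty_iff_ne_empty.mpr fun h => hf ?_
    rw [R.repr_sum f, h, Finset.sum_empty]
  obtain ⟨M, hM⟩ := Finset.max_of_nonempty hne
  have hdeg : R.natDegD f = M := by simp [natDegD, degD, hM]
  exact hdeg ▸ Finset.mem_of_max hM

lemma coeff_ι_mul (a : K) (f : S) (n : ℕ) : R.coeff (R.ι a * f) n = a * R.coeff f n := by
  have hexp : R.ι a * f = ∑ k ∈ R.supp f, R.ι (a * R.coeff f k) * R.D ^ k := by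
    conv_lhs => rw [R.repr_sum f]
    simp only [Finset.mul_sum, ← mul_assoc, map_mul]
  rw [hexp, coeff_sum_monomial]
  conv_rhs => rw [← R.ite_mem_supp f n]
  rw [mul_ite, mul_zero]

lemma coeff_D_mul_succ (f : S) (n : ℕ) :
    R.coeff (R.D * f) (n + 1) = R.coeff f n + δ (R.coeff f (n + 1)) := by
  have hexp : R.D * f = ∑ k ∈ R.supp f, R.ι (R.coeff f k) * R.D ^ (k + 1)
      + ∑ k ∈ R.supp f, R.ι (δ (R.coeff f k)) * R.D ^ k := by
    conv_lhs => rw [R.repr_sum f]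
    rw [Finset.mul_sum, ← Finset.sum_add_distrib]
    refine Finset.sum_congr rfl fun k _ => ?_
    rw [← mul_assoc, R.comm_rule, add_mul, mul_assoc, ← pow_succ']
  rw [hexp, R.coeff_add, coeff_sum_monomial, coeff_sum]
  simp only [coeff_monomial, add_left_inj, Finset.sum_ite_eq, R.ite_mem_supp]
  split_ifs
  · rfl
  · rw [← R.ite_mem_supp f (n + 1), if_neg ‹_›, R.δ_zero]

lemma coeff_D_pow_mul (g : S) (n : ℕ) {m : ℕ} (hm : R.natDegD g + n ≤ m) :
    R.coeff (R.D ^ n * g) m = if m = R.natDegD g + n then R.coeff g (R.natDegD g) else 0 := by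
  induction n generalizing m with
  | zero =>
    rw [pow_zero, one_mul, add_zero]
    split_ifs with h
    · rw [h]
    · exact R.coeff_eq_zero_of_natDegD_lt (by omega)
  | succ n ih =>
    obtain ⟨m, rfl⟩ : ∃ k, m = k + 1 := ⟨m - 1, by omega⟩
    rw [pow_succ', mul_assoc, coeff_D_mul_succ, ih (m := m) (by omega),
      ih (m := m + 1) (by omega), if_neg (show m + 1 ≠ R.natDegD g + n by omega), R.δ_zero,
      add_zero]
    exact if_congr (by omega) rfl rfl

lemma coeff_mul_natDegD_add (f g : S) :
    R.coeff (f * g) (R.natDegD f + R.natDegD g)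
      = R.coeff f (R.natDegD f) * R.coeff g (R.natDegD g) := by
  have hterm : ∀ k ∈ R.supp f, R.coeff (R.ι (R.coeff f k) * R.D ^ k * g)
      (R.natDegD f + R.natDegD g)
        = if k = R.natDegD f then R.coeff f k * R.coeff g (R.natDegD g) else 0 := by
    intro k hk
    have hk := R.le_natDegD_of_mem_supp hk
    rw [mul_assoc, coeff_ι_mul, R.coeff_D_pow_mul _ _ (by omega), mul_ite, mul_zero]
    exact if_congr (by omega) rfl rfl
  have hexp : f * g = ∑ k ∈ R.supp f, R.ι (R.coeff f k) * R.D ^ k * g := by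
    rw [← Finset.sum_mul, ← R.repr_sum]
  rw [hexp, coeff_sum, Finset.sum_congr rfl hterm, Finset.sum_ite_eq']
  conv_rhs => rw [← R.ite_mem_supp f, ite_mul, zero_mul]

lemma degD_le_degD_mul_of_monic {f g : S} (hf : f ≠ 0) (hg : R.Monic g) :
    R.degD g ≤ R.degD (f * g) := by
  have hlead : R.natDegD f + R.natDegD g ∈ R.supp (f * g) := by
    rw [R.mem_supp, coeff_mul_natDegD_add, (hg : R.coeff g (R.natDegD g) = 1), mul_one,
      ← R.mem_supp]
    exact R.natDegD_mem_supp hf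
  calc R.degD g ≤ R.natDegD g := WithBot.le_coe_unbotD _ 0
    _ ≤ ((R.natDegD f + R.natDegD g : ℕ) : WithBot ℕ) := by exact_mod_cast Nat.le_add_left _ _
    _ ≤ R.degD (f * g) := Finset.le_max hlead

lemma degD_sub_le (f g : S) : R.degD (f - g) ≤ max (R.degD f) (R.degD g) := by
  have hsupp : R.supp (f - g) ⊆ R.supp f ∪ R.supp g := by
    intro n hn
    rw [Finset.mem_union, R.mem_supp, R.mem_supp]
    by_contra! h
    exact (R.mem_supp _ n).mp hn (by rw [coeff_sub, h.1, h.2, sub_zero])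
  exact (Finset.max_mono hsupp).trans_eq Finset.max_union

/-- Uniqueness of the remainder on division by a monic element. -/
lemma eq_zero_of_degD_add_mul_lt {f h r : S} (hh : R.Monic h) (hr : R.degD r < R.degD h)
    (hrf : R.degD (r + f * h) < R.degD h) : f = 0 := by
  by_contra hf
  have hle : R.degD h ≤ max (R.degD (r + f * h)) (R.degD r) :=
    calc R.degD h ≤ R.degD (f * h) := R.degD_le_degD_mul_of_monic hf hh
      _ = R.degD (r + f * h - r) := by rw [add_sub_cancel_left]
      _ ≤ _ := R.degD_sub_le _ _
  exact (hle.trans_lt (max_lt hrf hr)).false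

lemma entry_eq_zero_of_hermiteForm_mul {n : ℕ} {W H : Matrix (Fin n) (Fin n) S}
    (hWtri : ∀ i j, j < i → W i j = 0) (hWdiag : ∀ i, W i i = 1)
    (hH : R.HermiteForm H) (hWH : R.HermiteForm (W * H)) {i j : Fin n}
    (hcols : ∀ k < j, ∀ l < k, W l k = 0) (hij : i < j) : W i j = 0 := by
  have hdiag : (W * H) j j = H j j := by
    rw [Matrix.mul_apply_self_eq_mul (hWtri j) (hH.1 · j), hWdiag, one_mul]
  have hentry : (W * H) i j = H i j + W i j * H j j := by
    refine (Matrix.mul_apply_eq_mul_add_mul hij.ne (fun k hkj hki => ?_) (hH.1 · j)).trans ?_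
    · rcases hki.lt_or_gt with hk | hk
      · exact hWtri i k hk
      · exact hcols k hkj i hk
    · rw [hWdiag, one_mul]
  have hred := hWH.2.2 i j hij
  rw [hdiag, hentry] at hred
  exact R.eq_zero_of_degD_add_mul_lt (hH.2.1 j) (hH.2.2 i j hij) hred

end DiffPolyRing

theorem upper_unitriangular_preserving_hermite_is_id_general
    {F : Type} [Field F] {S : Type} [Ring S]
    (δ : RatFunc F → RatFunc F)
    (R : DiffPolyRing (RatFunc F) S δ) {n : ℕ}
    (W H : Matrix (Fin n) (Fin n) S)
    (hWtri : ∀ i j, j < i → W i j = 0)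
    (hWdiag : ∀ i, W i i = 1)
    (hH : R.HermiteForm H)
    (hWH : R.HermiteForm (W * H)) :
    W = 1 := by
  have hupper : ∀ j, ∀ i < j, W i j = 0 := by
    intro j
    induction j using WellFoundedLT.induction with
    | ind j ih => exact fun i => R.entry_eq_zero_of_hermiteForm_mul hWtri hWdiag hH hWH ih
  ext i j
  rcases lt_trichotomy i j with h | rfl | h
  · rw [hupper j i h, Matrix.one_apply_ne h.ne]
  · rw [hWdiag, Matrix.one_apply_eq]
  · rw [hWtri i j h, Matrix.one_apply_ne h.ne']

/-- an upper triangular unimodular `W` with unit diagonal entries `1`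
such that `W·H` is again in Hermite form (for `H` in Hermite form of full row rank)
must be the identity. -/
theorem upper_unitriangular_preserving_hermite_is_id
    {F : Type} [Field F] [CharZero F] {S : Type} [Ring S]
    (δ : RatFunc F → RatFunc F)
    (hδadd : ∀ a b : RatFunc F, δ (a + b) = δ a + δ b)
    (hδmul : ∀ a b : RatFunc F, δ (a * b) = a * δ b + δ a * b)
    (R : DiffPolyRing (RatFunc F) S δ) {n : ℕ}
    (W H : Matrix (Fin n) (Fin n) S)
    (hWtri : ∀ i j, j < i → W i j = 0)
    (hWuni : IsUnit W)
    (hWdiag : ∀ i, W i i = 1)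
    (hH : R.HermiteForm H) (hHrank : DiffPolyRing.FullRowRank H)
    (hWH : R.HermiteForm (W * H)) :
    W = 1 :=
  upper_unitriangular_preserving_hermite_is_id_general δ R W H hWtri hWdiag hH hWH
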